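/- Let f be a nonconstant map in C(Σ, M). Then the stabilizer of f under the action of the affine group, namely the set { (a, c) ∈ ℂ × ℂ : a ≠ 0 and f ∘ g_{a,c} = f }, is a compact subset of ℂ × ℂ (in particular it is bounded, closed in ℂ × ℂ, and the first coordinates are bounded away from 0). -/
import Mathlib


open OnePoint

/-- The reparametrization `g_{a,c} : Σ → Σ` of the Riemann sphere `Σ = OnePoint ℂ`
extending `z ↦ a · (z − c)` on `ℂ` and fixing the point at infinity. -/
noncomputable def gAff (a c : ℂ) (ha : a ≠ 0) : C(OnePoint ℂ, OnePoint ℂ) where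
  toFun := OnePoint.map (fun z => a * (z - c))
  continuous_toFun :=
    (Homeomorph.onePointCongr ((Homeomorph.subRight c).trans (Homeomorph.mulLeft₀ a ha))).continuous

lemma gAff_coe (a c : ℂ) (ha : a ≠ 0) (z : ℂ) :
    gAff a c ha (z : OnePoint ℂ) = ((a * (z - c) : ℂ) : OnePoint ℂ) := rfl

lemma gAff_infty (a c : ℂ) (ha : a ≠ 0) :
    gAff a c ha (∞ : OnePoint ℂ) = (∞ : OnePoint ℂ) := rfl

/-- The stabilizer of a nonconstant continuous map `f : Σ → M` under the reparametrization
action of the affine group `{z ↦ a(z − c)}` is a compact subset of `ℂ × ℂ`. -/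
theorem stabilizer_compact_affine {M : Type*} [MetricSpace M] [CompactSpace M]
    (f : C(OnePoint ℂ, M)) (hf : ∃ x y, f x ≠ f y) :
    IsCompact {p : ℂ × ℂ | ∃ ha : p.1 ≠ 0, f.comp (gAff p.1 p.2 ha) = f} := by
  have hcoe : Continuous ((↑) : ℂ → OnePoint ℂ) := OnePoint.continuous_coe
  have hFc : Continuous fun z : ℂ => f (z : OnePoint ℂ) := f.continuous.comp hcoe
  -- tendsto at infinity
  have htend : Filter.Tendsto (fun z : ℂ => f (z : OnePoint ℂ))
      (Filter.cocompact ℂ) (nhds (f ∞)) := by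
    have h1 : Filter.Tendsto ((↑) : ℂ → OnePoint ℂ) (Filter.cocompact ℂ)
        (nhds (∞ : OnePoint ℂ)) := by
      rw [← Filter.coclosedCompact_eq_cocompact]
      exact OnePoint.tendsto_coe_infty
    exact (f.continuous.tendsto ∞).comp h1
  -- if f is constant on ℂ then contradiction
  have hconst : ∀ m : M, (∀ z : ℂ, f (z : OnePoint ℂ) = m) → False := by
    intro m hm
    have hinf : m = f ∞ := by
      have : Filter.Tendsto (fun _ : ℂ => m) (Filter.cocompact ℂ) (nhds (f ∞)) := by
        simpa [hm] using htend
      exact tendsto_nhds_unique tendsto_const_nhds this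
    have hall : ∀ x : OnePoint ℂ, f x = m := by
      intro x
      induction x using OnePoint.rec with
      | infty => exact hinf.symm
      | coe z => exact hm z
    obtain ⟨x, y, hxy⟩ := hf
    exact hxy ((hall x).trans (hall y).symm)
  -- a point with value different from f ∞
  have hz0 : ∃ z₀ : ℂ, f (z₀ : OnePoint ℂ) ≠ f ∞ := by
    by_contra h
    push_neg at h
    exact hconst (f ∞) h
  obtain ⟨z₀, hz₀⟩ := hz0
  set δ := dist (f (z₀ : OnePoint ℂ)) (f ∞) with hδ
  have hδpos : 0 < δ := dist_pos.mpr hz₀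
  -- a nearby second point
  obtain ⟨η, hηpos, hη⟩ := Metric.continuous_iff.mp hFc z₀ (δ / 2) (half_pos hδpos)
  set z₁ : ℂ := z₀ + (η / 2 : ℝ) with hz₁def
  have hz₁dist : dist z₁ z₀ < η := by
    have : dist z₁ z₀ = η / 2 := by
      simp [hz₁def, Complex.dist_eq, abs_of_pos (half_pos hηpos), abs_of_pos hηpos]
    rw [this]; linarith
  have hz₁near : dist (f (z₁ : OnePoint ℂ)) (f (z₀ : OnePoint ℂ)) < δ / 2 := hη z₁ hz₁dist
  have hz₁ne : z₁ - z₀ ≠ 0 := by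
    simp only [hz₁def, add_sub_cancel_left]
    exact_mod_cast (ne_of_gt (half_pos hηpos))
  -- the bound R
  have hmem : {w : ℂ | dist (f (w : OnePoint ℂ)) (f ∞) < δ / 2} ∈ Filter.cocompact ℂ :=
    htend (Metric.ball_mem_nhds _ (half_pos hδpos))
  obtain ⟨K, hK, hKsub⟩ := Filter.hasBasis_cocompact.mem_iff.mp hmem
  obtain ⟨R, hR⟩ := hK.isBounded.subset_closedBall 0
  have hbound : ∀ w : ℂ,
      (f (w : OnePoint ℂ) = f (z₀ : OnePoint ℂ) ∨ f (w : OnePoint ℂ) = f (z₁ : OnePoint ℂ)) →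
      ‖w‖ ≤ R := by
    intro w hw
    by_contra hwR
    push_neg at hwR
    have hwK : w ∉ K := by
      intro hwK
      have := hR hwK
      simp only [Metric.mem_closedBall, dist_zero_right] at this
      linarith
    have hsmall : dist (f (w : OnePoint ℂ)) (f ∞) < δ / 2 := hKsub hwK
    rcases hw with hw | hw
    · rw [hw] at hsmall; linarith [hδpos]
    · rw [hw] at hsmall
      have htri := dist_triangle (f ((z₀ : ℂ) : OnePoint ℂ)) (f ((z₁ : ℂ) : OnePoint ℂ)) (f ∞)
      rw [← hδ] at htri
      have hcm : dist (f ((z₀ : ℂ) : OnePoint ℂ)) (f ((z₁ : ℂ) : OnePoint ℂ))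
          = dist (f ((z₁ : ℂ) : OnePoint ℂ)) (f ((z₀ : ℂ) : OnePoint ℂ)) := dist_comm _ _
      linarith
  -- the closed set T of (α, β) parameters
  set T : Set (ℂ × ℂ) :=
    {p : ℂ × ℂ | ∀ z : ℂ, f ((p.1 * z + p.2 : ℂ) : OnePoint ℂ) = f (z : OnePoint ℂ)} with hT
  have hTclosed : IsClosed T := by
    have : T = ⋂ z : ℂ, {p : ℂ × ℂ | f ((p.1 * z + p.2 : ℂ) : OnePoint ℂ) = f (z : OnePoint ℂ)} := by
      ext p; simp [hT]
    rw [this]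
    refine isClosed_iInter fun z => isClosed_eq ?_ continuous_const
    exact hFc.comp ((continuous_fst.mul continuous_const).add continuous_snd)
  -- elements of T have nonzero first coordinate
  have hTne : ∀ p ∈ T, p.1 ≠ 0 := by
    intro p hp h0
    refine hconst (f ((p.2 : ℂ) : OnePoint ℂ)) fun z => ?_
    have := hp z
    rw [h0] at this
    simpa using this.symm
  -- T is bounded
  have hA : ∀ p ∈ T, ‖p.1‖ ≤ 4 * R / η ∧ ‖p.2‖ ≤ R + (4 * R / η) * ‖z₀‖ := by
    intro p hp
    have h0 : ‖p.1 * z₀ + p.2‖ ≤ R := hbound _ (Or.inl (hp z₀))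
    have h1 : ‖p.1 * z₁ + p.2‖ ≤ R := hbound _ (Or.inr (hp z₁))
    have hdiff : ‖p.1‖ * (η / 2) ≤ 2 * R := by
      have : (p.1 * z₁ + p.2) - (p.1 * z₀ + p.2) = p.1 * (z₁ - z₀) := by ring
      have h2 : ‖p.1 * (z₁ - z₀)‖ ≤ 2 * R := by
        rw [← this]
        calc ‖(p.1 * z₁ + p.2) - (p.1 * z₀ + p.2)‖ ≤ ‖p.1 * z₁ + p.2‖ + ‖p.1 * z₀ + p.2‖ :=
              norm_sub_le _ _
          _ ≤ 2 * R := by linarith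
      have h3 : ‖z₁ - z₀‖ = η / 2 := by
        simp [hz₁def, abs_of_pos (half_pos hηpos), abs_of_pos hηpos]
      rw [norm_mul, h3] at h2
      exact h2
    have hA1 : ‖p.1‖ ≤ 4 * R / η := by
      rw [le_div_iff₀ hηpos]
      nlinarith
    refine ⟨hA1, ?_⟩
    have : ‖p.2‖ ≤ ‖p.1 * z₀ + p.2‖ + ‖p.1 * z₀‖ := by
      have := norm_sub_le (p.1 * z₀ + p.2) (p.1 * z₀)
      simpa using this
    rw [norm_mul] at this
    have hz0norm : 0 ≤ ‖z₀‖ := norm_nonneg _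
    nlinarith [norm_nonneg p.1]
  -- T is compact
  have hTcompact : IsCompact T := by
    refine IsCompact.of_isClosed_subset
      ((isCompact_closedBall (0 : ℂ) (4 * R / η)).prod
        (isCompact_closedBall (0 : ℂ) (R + (4 * R / η) * ‖z₀‖))) hTclosed ?_
    intro p hp
    obtain ⟨h1, h2⟩ := hA p hp
    constructor <;> simp only [Metric.mem_closedBall, dist_zero_right] <;> assumption
  -- the stabilizer is the image of T under ψ
  have himg : {p : ℂ × ℂ | ∃ ha : p.1 ≠ 0, f.comp (gAff p.1 p.2 ha) = f}
      = (fun p : ℂ × ℂ => (p.1, -p.2 / p.1)) '' T := by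
    ext q
    constructor
    · rintro ⟨ha, heq⟩
      refine ⟨(q.1, -(q.1 * q.2)), fun z => ?_, ?_⟩
      · have := DFunLike.congr_fun heq ((z : ℂ) : OnePoint ℂ)
        simp only [ContinuousMap.comp_apply, gAff_coe] at this
        convert this using 3
        ring
      · simp only []
        rw [neg_neg]
        rw [mul_comm, mul_div_assoc, div_self ha, mul_one]
    · rintro ⟨p, hp, rfl⟩
      have ha : p.1 ≠ 0 := hTne p hp
      refine ⟨ha, ContinuousMap.ext fun x => ?_⟩
      induction x using OnePoint.rec with
      | infty => simp [gAff_infty]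
      | coe z =>
        simp only [ContinuousMap.comp_apply, gAff_coe]
        have := hp z
        convert this using 3
        field_simp
        ring
  rw [himg]
  refine hTcompact.image_of_continuousOn ?_
  refine ContinuousOn.prodMk continuous_fst.continuousOn ?_
  refine ContinuousOn.div continuous_snd.neg.continuousOn continuous_fst.continuousOn ?_
  intro p hp
  exact hTne p hp
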